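/- For all natural numbers r and m with 0 ≤ m ≤ r, define Ssq(r,m) := [2m+1]·D₋₁·G(r−m)·G(r+m+1) / ( [r+1]²·G(r+1)² ) ∈ K (the square of the first-row Racah matrix entry S₀ₘ). Then there exist polynomials f, g ∈ ℚ[q,A] with Ssq(r,m) = f/g in K, such that the images of g under each of the two substitutions A := q and A := −q are nonzero elements of ℚ[q], and such that under each of these substitutions the quotient f/g, taken in the field ℚ(q), equals 1 if m = r and equals 0 if m < r. (This is the S-part of the paper's Lemma: at A = ±q the first row of the Racah matrix S satisfies S₀ₘ = δ_{m,r}.) -/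

import Mathlib

/- Let K be the fraction field of the polynomial ring ℚ[q,A]. -/

namespace Stmt6

/-- `K` is the fraction field of `ℚ[q,A]`. -/
abbrev K : Type := FractionRing (MvPolynomial (Fin 2) ℚ)

/-- The image of the indeterminate `q` in `K`. -/
noncomputable def q : K := algebraMap (MvPolynomial (Fin 2) ℚ) K (MvPolynomial.X 0)

/-- The image of the indeterminate `A` in `K`. -/
noncomputable def A : K := algebraMap (MvPolynomial (Fin 2) ℚ) K (MvPolynomial.X 1)

/-- `{x} := x − x⁻¹`. -/
noncomputable def br (x : K) : K := x - x⁻¹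

/-- The quantum integer `[n] := {qⁿ}/{q}` for `n ∈ ℤ`. -/
noncomputable def qint (n : ℤ) : K := br (q ^ n) / br q

/-- `D_j := {A·q^j}/{q}` for `j ∈ ℤ`. -/
noncomputable def D (j : ℤ) : K := br (A * q ^ j) / br q

/-- `G(n) := Π_{j=1}^{n} {A·q^{j−2}}/{q^j}` (so `G(0) = 1`). -/
noncomputable def G (n : ℕ) : K :=
  ∏ j ∈ Finset.Icc 1 n, br (A * q ^ ((j : ℤ) - 2)) / br (q ^ (j : ℤ))

/-- `Ssq(r,m) := [2m+1]·D₋₁·G(r−m)·G(r+m+1) / ( [r+1]²·G(r+1)² )`, the square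
of the first-row Racah matrix entry `S₀ₘ`. -/
noncomputable def Ssq (r m : ℕ) : K :=
  qint (2 * (m : ℤ) + 1) * D (-1) * G (r - m) * G (r + m + 1) /
    ((qint ((r : ℤ) + 1)) ^ 2 * (G (r + 1)) ^ 2)

/-- The substitution `q ↦ q`, `A ↦ q` from `ℚ[q,A]` into `ℚ[q]`. -/
noncomputable def subPos : MvPolynomial (Fin 2) ℚ →ₐ[ℚ] Polynomial ℚ :=
  MvPolynomial.aeval ![Polynomial.X, Polynomial.X]

/-- The substitution `q ↦ q`, `A ↦ −q` from `ℚ[q,A]` into `ℚ[q]`. -/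
noncomputable def subNeg : MvPolynomial (Fin 2) ℚ →ₐ[ℚ] Polynomial ℚ :=
  MvPolynomial.aeval ![Polynomial.X, -Polynomial.X]

/-! The factor `D₋₁ = {A q⁻¹}/{q}` is the only one in `Ssq(r,m)` that vanishes at `A = ±q`, and
`G(n+1) = D₋₁ · H(n)` with `H(n) = Π_{k<n} {A qᵏ}/{q^{k+2}}`. Cancelling in `K`, `Ssq(m,m)` is
`[2m+1] H(2m) / ([m+1] H(m))²` and `Ssq(r,m)` for `m < r` is `D₋₁` times a quotient of factors
regular at `A = ±q`. At `A = εq` (`ε = ±1`) the product `[n+1] H(n)` telescopes to `εⁿ`, so the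
first quotient takes the value `1` and the second the value `0`. -/

section Bracket

variable {F : Type*} [Field F]

/-- The bracket `{x}` over an arbitrary field; on `K` it is `br`. -/
def bracket (x : F) : F := x - x⁻¹

theorem ne_zero_of_bracket_ne_zero {x : F} (h : bracket x ≠ 0) : x ≠ 0 := by
  rintro rfl
  simp [bracket] at h

theorem bracket_eq_zero_of_mul_self_eq_one {ε : F} (hε : ε * ε = 1) : bracket ε = 0 := by
  rw [bracket, inv_eq_of_mul_eq_one_right hε, sub_self]

theorem bracket_mul_of_mul_self_eq_one {ε : F} (hε : ε * ε = 1) (x : F) :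
    bracket (ε * x) = ε * bracket x := by
  rw [bracket, bracket, mul_inv, inv_eq_of_mul_eq_one_right hε, mul_sub]

theorem bracket_pow_succ_div_mul_prod_range {ε y : F} (hε : ε * ε = 1)
    (hy : ∀ k : ℕ, bracket (y ^ (k + 1)) ≠ 0) (n : ℕ) :
    bracket (y ^ (n + 1)) / bracket y *
        ∏ k ∈ Finset.range n, bracket (ε * y * y ^ k) / bracket (y ^ (k + 2)) = ε ^ n := by
  induction n with
  | zero => simpa using div_self (by simpa using hy 0)
  | succ n ih =>
    have h1 : bracket y ≠ 0 := by simpa using hy 0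
    have h2 : bracket (y ^ (n + 2)) ≠ 0 := hy (n + 1)
    rw [Finset.prod_range_succ, mul_assoc ε, ← pow_succ', bracket_mul_of_mul_self_eq_one hε,
      pow_succ ε, ← ih]
    field_simp

end Bracket

section HasValueAt

variable {R K F ι : Type*} [CommRing R] [Field K] [Algebra R K] [Field F]

/-- `x` is regular at all the points `ψ i`, with one denominator serving all of them, and takes
the value `v i` at `ψ i`. -/
def HasValueAt (ψ : ι → R →+* F) (x : K) (v : ι → F) : Prop :=
  ∃ f g : R, x = algebraMap R K f / algebraMap R K g ∧ ∀ i, ψ i g ≠ 0 ∧ ψ i f = v i * ψ i g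

theorem hasValueAt_algebraMap {ψ : ι → R →+* F} (p : R) :
    HasValueAt ψ (algebraMap R K p) (fun i => ψ i p) :=
  ⟨p, 1, by simp, fun i => by simp⟩

namespace HasValueAt

variable {ψ : ι → R →+* F} {x y : K} {v w : ι → F}

theorem one : HasValueAt ψ (1 : K) 1 :=
  ⟨1, 1, by simp, fun i => by simp⟩

theorem mul (hx : HasValueAt ψ x v) (hy : HasValueAt ψ y w) : HasValueAt ψ (x * y) (v * w) := by
  obtain ⟨f, g, rfl, hfg⟩ := hx
  obtain ⟨f', g', rfl, hfg'⟩ := hy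
  refine ⟨f * f', g * g', by rw [map_mul, map_mul, mul_div_mul_comm], fun i => ⟨?_, ?_⟩⟩
  · simpa only [map_mul] using mul_ne_zero (hfg i).1 (hfg' i).1
  · simp only [map_mul, (hfg i).2, (hfg' i).2, Pi.mul_apply]
    ring

theorem neg (hx : HasValueAt ψ x v) : HasValueAt ψ (-x) (-v) := by
  obtain ⟨f, g, rfl, hfg⟩ := hx
  refine ⟨-f, g, by rw [map_neg, neg_div], fun i => ⟨(hfg i).1, ?_⟩⟩
  simp [(hfg i).2]

theorem inv (hx : HasValueAt ψ x v) (hv : ∀ i, v i ≠ 0) : HasValueAt ψ x⁻¹ v⁻¹ := by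
  obtain ⟨f, g, rfl, hfg⟩ := hx
  refine ⟨g, f, (inv_div _ _), fun i => ⟨?_, ?_⟩⟩
  · rw [(hfg i).2]
    exact mul_ne_zero (hv i) (hfg i).1
  · rw [(hfg i).2, Pi.inv_apply, inv_mul_cancel_left₀ (hv i)]

theorem div (hx : HasValueAt ψ x v) (hy : HasValueAt ψ y w) (hw : ∀ i, w i ≠ 0) :
    HasValueAt ψ (x / y) (v / w) := by
  simpa only [div_eq_mul_inv] using hx.mul (hy.inv hw)

theorem pow (hx : HasValueAt ψ x v) (n : ℕ) : HasValueAt ψ (x ^ n) (v ^ n) := by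
  induction n with
  | zero => simpa using one
  | succ n ih => simpa only [pow_succ] using ih.mul hx

theorem prod {α : Type*} {s : Finset α} {x : α → K} {v : α → ι → F}
    (h : ∀ a ∈ s, HasValueAt ψ (x a) (v a)) :
    HasValueAt ψ (∏ a ∈ s, x a) (∏ a ∈ s, v a) := by
  classical
  induction s using Finset.induction_on with
  | empty => simpa using one
  | insert a s ha ih =>
    rw [Finset.prod_insert ha, Finset.prod_insert ha]
    exact (h a (Finset.mem_insert_self a s)).mul (ih fun b hb => h b (Finset.mem_insert_of_mem hb))

variable [IsFractionRing R K]

theorem ne_zero (hx : HasValueAt ψ x v) (i : ι) (hv : v i ≠ 0) : x ≠ 0 := by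
  obtain ⟨f, g, rfl, hfg⟩ := hx
  have hf : f ≠ 0 := by
    rintro rfl
    exact mul_ne_zero hv (hfg i).1 (by simpa using (hfg i).2.symm)
  have hg : g ≠ 0 := by
    rintro rfl
    exact (hfg i).1 (map_zero _)
  exact div_ne_zero ((map_ne_zero_iff _ (IsFractionRing.injective R K)).2 hf)
    ((map_ne_zero_iff _ (IsFractionRing.injective R K)).2 hg)

theorem add [Nonempty ι] (hx : HasValueAt ψ x v) (hy : HasValueAt ψ y w) :
    HasValueAt ψ (x + y) (v + w) := by
  obtain ⟨f, g, rfl, hfg⟩ := hx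
  obtain ⟨f', g', rfl, hfg'⟩ := hy
  have hφ {p : R} (hp : ∀ i, ψ i p ≠ 0) : algebraMap R K p ≠ 0 := by
    refine (map_ne_zero_iff _ (IsFractionRing.injective R K)).2 ?_
    rintro rfl
    exact hp (Classical.arbitrary ι) (map_zero _)
  refine ⟨f * g' + g * f', g * g', ?_, fun i => ⟨?_, ?_⟩⟩
  · rw [div_add_div _ _ (hφ fun i => (hfg i).1) (hφ fun i => (hfg' i).1)]
    simp only [map_add, map_mul]
  · simpa only [map_mul] using mul_ne_zero (hfg i).1 (hfg' i).1
  · simp only [map_add, map_mul, (hfg i).2, (hfg' i).2, Pi.add_apply]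
    ring

theorem sub [Nonempty ι] (hx : HasValueAt ψ x v) (hy : HasValueAt ψ y w) :
    HasValueAt ψ (x - y) (v - w) := by
  simpa only [sub_eq_add_neg] using hx.add hy.neg

theorem bracket [Nonempty ι] (hx : HasValueAt ψ x v) (hv : ∀ i, v i ≠ 0) :
    HasValueAt ψ (bracket x) (fun i => bracket (v i)) :=
  hx.sub (hx.inv hv)

end HasValueAt

end HasValueAt

noncomputable def Gtail (n : ℕ) : K :=
  ∏ k ∈ Finset.range n, br (A * q ^ k) / br (q ^ (k + 2))

theorem G_zero : G 0 = 1 := by simp [G]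

theorem G_succ (n : ℕ) : G (n + 1) = D (-1) * Gtail n := by
  induction n with
  | zero => simp [G, Gtail, D]
  | succ n ih =>
    rw [G, Finset.prod_Icc_succ_top (by omega), ← G, ih, mul_assoc, Gtail, Gtail,
      Finset.prod_range_succ, show ((n + 1 + 1 : ℕ) : ℤ) - 2 = n by omega, zpow_natCast,
      zpow_natCast]

section Values

variable {ι F : Type*} [Field F] {ψ : ι → MvPolynomial (Fin 2) ℚ →+* F} {x a : ι → F}

theorem hasValueAt_q : HasValueAt ψ q (fun i => ψ i (MvPolynomial.X 0)) :=
  hasValueAt_algebraMap _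

theorem hasValueAt_A : HasValueAt ψ A (fun i => ψ i (MvPolynomial.X 1)) :=
  hasValueAt_algebraMap _

variable [Nonempty ι]

theorem hasValueAt_qint (hq : HasValueAt ψ q x) (hx : ∀ i, bracket (x i) ≠ 0) (n : ℕ) :
    HasValueAt ψ (qint n) (fun i => bracket (x i ^ n) / bracket (x i)) := by
  rw [qint, zpow_natCast]
  exact ((hq.pow n).bracket fun i => pow_ne_zero _ (ne_zero_of_bracket_ne_zero (hx i))).div
    (hq.bracket fun i => ne_zero_of_bracket_ne_zero (hx i)) hx

theorem hasValueAt_D_neg_one (hq : HasValueAt ψ q x) (hA : HasValueAt ψ A a)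
    (hx : ∀ i, bracket (x i) ≠ 0) (ha : ∀ i, a i ≠ 0) :
    HasValueAt ψ (D (-1)) (fun i => bracket (a i * (x i)⁻¹) / bracket (x i)) := by
  have hx₀ i := ne_zero_of_bracket_ne_zero (hx i)
  rw [D, zpow_neg_one]
  exact ((hA.mul (hq.inv hx₀)).bracket fun i => mul_ne_zero (ha i) (inv_ne_zero (hx₀ i))).div
    (hq.bracket hx₀) hx

theorem hasValueAt_Gtail (hq : HasValueAt ψ q x) (hA : HasValueAt ψ A a)
    (hx : ∀ i k, bracket (x i ^ (k + 1)) ≠ 0) (ha : ∀ i, a i ≠ 0) (n : ℕ) :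
    HasValueAt ψ (Gtail n)
      (fun i => ∏ k ∈ Finset.range n, bracket (a i * x i ^ k) / bracket (x i ^ (k + 2))) := by
  have hx₀ i : x i ≠ 0 := ne_zero_of_bracket_ne_zero (by simpa using hx i 0)
  simp only [← Finset.prod_fn]
  refine HasValueAt.prod fun k _ => ?_
  exact ((hA.mul (hq.pow k)).bracket fun i => mul_ne_zero (ha i) (pow_ne_zero _ (hx₀ i))).div
    ((hq.pow (k + 2)).bracket fun i => pow_ne_zero _ (hx₀ i)) fun i => hx i (k + 1)

end Values

theorem D_neg_one_ne_zero : D (-1) ≠ 0 := by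
  -- `D₋₁` vanishes at `A = ±q`, so look at `q = 2`, `A = 1` instead.
  let ψ : Unit → MvPolynomial (Fin 2) ℚ →+* ℚ := fun _ => MvPolynomial.eval ![2, 1]
  refine (hasValueAt_D_neg_one (ψ := ψ) hasValueAt_q hasValueAt_A ?_ ?_).ne_zero () ?_ <;>
    norm_num [ψ, bracket]

theorem Ssq_self (m : ℕ) :
    Ssq m m = qint (2 * m + 1 : ℕ) * Gtail (2 * m) / (qint (m + 1 : ℕ) * Gtail m) ^ 2 := by
  rw [Ssq, Nat.sub_self, show m + m + 1 = 2 * m + 1 by ring, G_zero, G_succ, G_succ]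
  push_cast
  field_simp [D_neg_one_ne_zero]

theorem Ssq_add_add_one (m k : ℕ) :
    Ssq (m + k + 1) m = D (-1) * (qint (2 * m + 1 : ℕ) * Gtail k * Gtail (2 * m + k + 1) /
      (qint (m + k + 2 : ℕ) * Gtail (m + k + 1)) ^ 2) := by
  rw [Ssq, show m + k + 1 - m = k + 1 by omega, show m + k + 1 + m + 1 = 2 * m + k + 1 + 1 by ring,
    G_succ, G_succ, G_succ, show 2 * (m : ℤ) + 1 = (2 * m + 1 : ℕ) by push_cast; ring,
    show ((m + k + 1 : ℕ) : ℤ) + 1 = (m + k + 2 : ℕ) by push_cast; ring]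
  field_simp [D_neg_one_ne_zero]

noncomputable def subPM : Fin 2 → MvPolynomial (Fin 2) ℚ →+* RatFunc ℚ :=
  ![(algebraMap (Polynomial ℚ) (RatFunc ℚ)).comp subPos.toRingHom,
    (algebraMap (Polynomial ℚ) (RatFunc ℚ)).comp subNeg.toRingHom]

noncomputable def subSign : Fin 2 → RatFunc ℚ := ![1, -1]

theorem subSign_mul_self (i : Fin 2) : subSign i * subSign i = 1 := by
  fin_cases i <;> simp [subSign]

theorem subSign_ne_zero (i : Fin 2) : subSign i ≠ 0 :=
  left_ne_zero_of_mul_eq_one (subSign_mul_self i)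

theorem subSign_mul_X_ne_zero (i : Fin 2) : subSign i * RatFunc.X ≠ 0 :=
  mul_ne_zero (subSign_ne_zero i) RatFunc.X_ne_zero

theorem hasValueAt_subPM_q : HasValueAt subPM q (fun _ => RatFunc.X) := by
  convert hasValueAt_q using 2 with i
  fin_cases i <;> simp [subPM, subPos, subNeg]

theorem hasValueAt_subPM_A : HasValueAt subPM A (fun i => subSign i * RatFunc.X) := by
  convert hasValueAt_A using 2 with i
  fin_cases i <;> simp [subPM, subPos, subNeg, subSign]

theorem bracket_X_pow_succ_ne_zero {k : Type*} [Field k] (n : ℕ) :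
    bracket ((RatFunc.X : RatFunc k) ^ (n + 1)) ≠ 0 := by
  have hX : (RatFunc.X : RatFunc k) ^ (n + 1) ≠ 0 := pow_ne_zero _ RatFunc.X_ne_zero
  intro h
  rw [bracket, sub_eq_zero, ← mul_eq_one_iff_eq_inv₀ hX, ← pow_add, ← RatFunc.algebraMap_X,
    ← map_pow, ← map_one (algebraMap (Polynomial k) (RatFunc k)),
    (RatFunc.algebraMap_injective k).eq_iff] at h
  simpa using congrArg Polynomial.natDegree h

theorem hasValueAt_subPM_qint_mul_Gtail (n : ℕ) :
    HasValueAt subPM (qint (n + 1 : ℕ) * Gtail n) (fun i => subSign i ^ n) := by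
  have hqint := hasValueAt_qint hasValueAt_subPM_q
    (fun _ => by simpa using bracket_X_pow_succ_ne_zero 0) (n + 1)
  have hGtail := hasValueAt_Gtail hasValueAt_subPM_q hasValueAt_subPM_A
    (fun _ => bracket_X_pow_succ_ne_zero) subSign_mul_X_ne_zero n
  convert hqint.mul hGtail using 2 with i
  exact (bracket_pow_succ_div_mul_prod_range (subSign_mul_self i)
    bracket_X_pow_succ_ne_zero n).symm

theorem hasValueAt_subPM_Ssq_self (m : ℕ) : HasValueAt subPM (Ssq m m) (fun _ => 1) := by
  rw [Ssq_self]
  convert (hasValueAt_subPM_qint_mul_Gtail (2 * m)).div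
    ((hasValueAt_subPM_qint_mul_Gtail m).pow 2) (fun i => ?_) using 2 with i
  · simp [pow_mul, sq, ← mul_pow, subSign_mul_self]
  · exact pow_ne_zero _ (pow_ne_zero _ (subSign_ne_zero i))

theorem hasValueAt_subPM_Ssq_add_add_one (m k : ℕ) :
    HasValueAt subPM (Ssq (m + k + 1) m) (fun _ => 0) := by
  have hq := hasValueAt_subPM_q
  have hA := hasValueAt_subPM_A
  have hX : ∀ _ : Fin 2, bracket (RatFunc.X : RatFunc ℚ) ≠ 0 := fun _ => by
    simpa using bracket_X_pow_succ_ne_zero 0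
  have hD : HasValueAt subPM (D (-1)) 0 := by
    convert hasValueAt_D_neg_one hq hA hX subSign_mul_X_ne_zero using 2 with i
    rw [mul_inv_cancel_right₀ RatFunc.X_ne_zero,
      bracket_eq_zero_of_mul_self_eq_one (subSign_mul_self i), zero_div, Pi.zero_apply]
  have hGtail := hasValueAt_Gtail hq hA (fun _ => bracket_X_pow_succ_ne_zero) subSign_mul_X_ne_zero
  have hrest :=
    (((hasValueAt_qint hq hX (2 * m + 1)).mul (hGtail k)).mul (hGtail (2 * m + k + 1))).div
      ((hasValueAt_subPM_qint_mul_Gtail (m + k + 1)).pow 2)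
      fun i => pow_ne_zero _ (pow_ne_zero _ (subSign_ne_zero i))
  rw [Ssq_add_add_one]
  convert hD.mul hrest using 1
  exact (zero_mul _).symm

theorem exists_of_hasValueAt_subPM {x : K} {c : RatFunc ℚ}
    (h : HasValueAt subPM x fun _ => c) :
    ∃ f g : MvPolynomial (Fin 2) ℚ,
      x = algebraMap (MvPolynomial (Fin 2) ℚ) K f /
          algebraMap (MvPolynomial (Fin 2) ℚ) K g ∧
      subPos g ≠ 0 ∧ subNeg g ≠ 0 ∧
      algebraMap (Polynomial ℚ) (RatFunc ℚ) (subPos f) /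
          algebraMap (Polynomial ℚ) (RatFunc ℚ) (subPos g) = c ∧
      algebraMap (Polynomial ℚ) (RatFunc ℚ) (subNeg f) /
          algebraMap (Polynomial ℚ) (RatFunc ℚ) (subNeg g) = c := by
  obtain ⟨f, g, hx, hfg⟩ := h
  obtain ⟨hpos, hpos'⟩ : algebraMap _ (RatFunc ℚ) (subPos g) ≠ 0 ∧
      algebraMap _ (RatFunc ℚ) (subPos f) = c * algebraMap _ (RatFunc ℚ) (subPos g) := hfg 0
  obtain ⟨hneg, hneg'⟩ : algebraMap _ (RatFunc ℚ) (subNeg g) ≠ 0 ∧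
      algebraMap _ (RatFunc ℚ) (subNeg f) = c * algebraMap _ (RatFunc ℚ) (subNeg g) := hfg 1
  refine ⟨f, g, hx, fun h => hpos (by rw [h, map_zero]), fun h => hneg (by rw [h, map_zero]),
    ?_, ?_⟩
  · rw [hpos', mul_div_cancel_right₀ _ hpos]
  · rw [hneg', mul_div_cancel_right₀ _ hneg]

/-- For `0 ≤ m ≤ r` there exist polynomials `f, g ∈ ℚ[q,A]` with
`Ssq(r,m) = f/g` in `K`, such that the images of `g` under each of the two
substitutions `A := q` and `A := −q` are nonzero elements of `ℚ[q]`, and such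
that under each of these substitutions the quotient `f/g`, taken in `ℚ(q)`,
equals `1` if `m = r` and equals `0` if `m < r`: at `A = ±q` the first row of
the Racah matrix `S` satisfies `S₀ₘ = δ_{m,r}`. -/
theorem S_first_row_at_A_eq_pm_q (r m : ℕ) (hm : m ≤ r) :
    ∃ f g : MvPolynomial (Fin 2) ℚ,
      Ssq r m = algebraMap (MvPolynomial (Fin 2) ℚ) K f /
          algebraMap (MvPolynomial (Fin 2) ℚ) K g ∧
      subPos g ≠ 0 ∧ subNeg g ≠ 0 ∧
      algebraMap (Polynomial ℚ) (RatFunc ℚ) (subPos f) /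
          algebraMap (Polynomial ℚ) (RatFunc ℚ) (subPos g) =
        (if m = r then 1 else 0) ∧
      algebraMap (Polynomial ℚ) (RatFunc ℚ) (subNeg f) /
          algebraMap (Polynomial ℚ) (RatFunc ℚ) (subNeg g) =
        (if m = r then 1 else 0) := by
  split_ifs with hmr
  · subst hmr
    exact exists_of_hasValueAt_subPM (hasValueAt_subPM_Ssq_self m)
  · obtain ⟨k, rfl⟩ : ∃ k, r = m + k + 1 := ⟨r - m - 1, by omega⟩
    exact exists_of_hasValueAt_subPM (hasValueAt_subPM_Ssq_add_add_one m k)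

end Stmt6
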